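/- arXiv:1401.1541 — 2 statements merged into one kernel-verified Lean document; each statement's English description precedes it below -/
import Mathlib

section
/- Every cobipartite circle graph (a circle graph whose vertex set can be partitioned into two cliques) is a permutation graph. -/
open SimpleGraph

/-- The circle on which chord diagrams live (the unit circle as an additive circle). -/
abbrev Circ : Type := AddCircle (1 : ℝ)

/-- A circle representation of a graph `G`: each vertex `v` gets a chord with
distinct endpoints `p v` and `q v`, all `2|V|` endpoints are distinct, and two
distinct vertices are adjacent iff their chords cross (i.e. exactly one endpoint
of one chord lies strictly inside an arc determined by the other chord). -/
structure CircleRep (V : Type) (G : SimpleGraph V) where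
  p : V → Circ
  q : V → Circ
  inj : Function.Injective (Sum.elim p q)
  adj : ∀ u v : V, G.Adj u v ↔ u ≠ v ∧
    Xor' (sbtw (p v) (p u) (q v)) (sbtw (p v) (q u) (q v))

namespace CircleRep

variable {V : Type} {G : SimpleGraph V} (R : CircleRep V G)

/-- The two open arcs of the chord of `v`: `b = true` is the arc from `p v`
clockwise to `q v`, `b = false` is the other arc. -/
def ArcSet (v : V) (b : Bool) : Set Circ :=
  if b then {x | sbtw (R.p v) x (R.q v)} else {x | sbtw (R.q v) x (R.p v)}

/-- The arc `b` of the chord of `v` is empty: it contains both endpoints of no chord. -/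
def ArcEmpty (v : V) (b : Bool) : Prop :=
  ∀ u : V, ¬ (R.p u ∈ R.ArcSet v b ∧ R.q u ∈ R.ArcSet v b)

/-- A chord is peripheral if one of its arcs is empty. -/
def Peripheral (v : V) : Prop := ∃ b : Bool, R.ArcEmpty v b

/-- A set `T` of corner points satisfies the chord of `v` if each of the two
arcs of the chord contains a corner. -/
def SatChord (T : Finset Circ) (v : V) : Prop :=
  (∃ t ∈ T, t ∈ R.ArcSet v true) ∧ (∃ t ∈ T, t ∈ R.ArcSet v false)

/-- `T` is a satisfying set of corners: the corners are distinct from all chord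
endpoints and every chord has a corner in each of its arcs. -/
def GoodCorners (T : Finset Circ) : Prop :=
  (∀ t ∈ T, ∀ v : V, t ≠ R.p v ∧ t ≠ R.q v) ∧ ∀ v : V, R.SatChord T v

/-- The polygon number `ψ_r` of a circle representation: the minimum number of
corners that must be added to satisfy all chords. -/
noncomputable def polyNum : ℕ :=
  sInf {k | ∃ T : Finset Circ, T.card = k ∧ R.GoodCorners T}

/-- `c 0, …, c (ℓ-1)` is an ℓ-independent set in series: there is a point `x`
on the circle such that a clockwise traversal starting at `x` encounters both
endpoints of `c i` before both endpoints of `c j` whenever `i < j`. -/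
def SeriesIndep {ℓ : ℕ} (c : Fin ℓ → V) : Prop :=
  Function.Injective c ∧ ∃ x : Circ,
    (∀ i : Fin ℓ, x ≠ R.p (c i) ∧ x ≠ R.q (c i)) ∧
    ∀ i j : Fin ℓ, i < j →
      ∀ e ∈ ({R.p (c i), R.q (c i)} : Set Circ),
        ∀ f ∈ ({R.p (c j), R.q (c j)} : Set Circ), sbtw x e f

end CircleRep

/-- The polygon number `ψ(G)`: the minimum `k` such that `G` has a circle
representation together with `k` corners satisfying all chords. -/
noncomputable def polygonNumber {V : Type} (G : SimpleGraph V) : ℕ :=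
  sInf {k | ∃ R : CircleRep V G, ∃ T : Finset Circ, T.card = k ∧ R.GoodCorners T}

/-- A permutation graph: a graph having a circle representation admitting two
corner points such that each chord has one corner in each of its arcs. -/
def IsPermutationGraph {V : Type} (G : SimpleGraph V) : Prop :=
  ∃ R : CircleRep V G, ∃ T : Finset Circ, T.card = 2 ∧ R.GoodCorners T

/-- The clique cover number `κ(G)`: least `n` such that the vertex set can be
partitioned into `n` cliques. -/
noncomputable def cliqueCoverNumber {V : Type} (G : SimpleGraph V) : ℕ :=
  sInf {n | ∃ f : V → Fin n, ∀ u v : V, f u = f v → u = v ∨ G.Adj u v}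

/-- The independence number `α(G)`. -/
noncomputable def indepNumber {V : Type} (G : SimpleGraph V) : ℕ :=
  sSup {n | ∃ s : Finset V, (∀ u ∈ s, ∀ v ∈ s, u ≠ v → ¬ G.Adj u v) ∧ s.card = n}

/-- `A` is an asteroidal set of `G`: for every `a ∈ A`, any two vertices of
`A \ {a}` are connected by a path in `G - N[a]`. -/
def IsAsteroidal {V : Type} (G : SimpleGraph V) (A : Set V) : Prop :=
  ∀ a ∈ A, ∀ x ∈ A, ∀ y ∈ A, x ≠ a → y ≠ a →
    ∃ (hx : x ∈ {w | w ≠ a ∧ ¬ G.Adj a w}) (hy : y ∈ {w | w ≠ a ∧ ¬ G.Adj a w}),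
      (G.induce {w | w ≠ a ∧ ¬ G.Adj a w}).Reachable ⟨x, hx⟩ ⟨y, hy⟩

/-- The asteroidal number `an(G)`: maximum size of an asteroidal set. -/
noncomputable def asteroidalNumber {V : Type} (G : SimpleGraph V) : ℕ :=
  sSup {n | ∃ A : Finset V, IsAsteroidal G ↑A ∧ A.card = n}

/-- `G` is AT-free: it has no asteroidal triple. -/
def ATFree {V : Type} (G : SimpleGraph V) : Prop :=
  ¬ ∃ a b c : V, a ≠ b ∧ a ≠ c ∧ b ≠ c ∧ IsAsteroidal G {a, b, c}

/-- `G` is distance hereditary: in every connected induced subgraph, distances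
agree with those of `G`. -/
def DistanceHereditary {V : Type} (G : SimpleGraph V) : Prop :=
  ∀ s : Set V, (G.induce s).Connected →
    ∀ u v : ↥s, (G.induce s).dist u v = G.dist (u : V) (v : V)

/-- `{V1, V2}` is a split of `G`. -/
def IsSplit {V : Type} (G : SimpleGraph V) (V1 V2 : Set V) : Prop :=
  V1 ∪ V2 = Set.univ ∧ Disjoint V1 V2 ∧ 1 < V1.ncard ∧ 1 < V2.ncard ∧
    ∀ x ∈ V1, ∀ y ∈ V2,
      (G.Adj x y ↔ (∃ y' ∈ V2, G.Adj x y') ∧ (∃ x' ∈ V1, G.Adj x' y))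

/-!
Cut the circle at two points `x`, `y` that are not chord endpoints. If the open arc from `x` to
`y` contains exactly `|V|` endpoints, exactly `|A|` of them on chords of the clique `A`, then every
chord has exactly one endpoint on that arc. Indeed, a chord with both endpoints on the arc does not
cross a chord with none, so inside each of the two cliques the per-chord counts are all `≤ 1` or
all `≥ 1`; as they sum to the size of the clique, they all equal one. Such a cut exists by a
discrete intermediate value argument: read the `2|V|` endpoints in order from a base point and
slide a window of `|V|` consecutive ones; each step changes the number of `A`-endpoints inside by
at most one, and the windows starting at the first and at the `(|V|+1)`-st endpoint are
complementary, so their counts average to `|A|`.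
-/

open Finset

theorem exists_eq_of_abs_sub_le_one {a : ℕ → ℤ} {c : ℤ} :
    ∀ {m : ℕ}, (∀ i < m, |a (i + 1) - a i| ≤ 1) → (a 0 ≤ c ∧ c ≤ a m ∨ a m ≤ c ∧ c ≤ a 0) →
      ∃ i ≤ m, a i = c
  | 0, _, hc => ⟨0, le_rfl, by omega⟩
  | m + 1, ha, hc => by
    by_cases hm : a 0 ≤ c ∧ c ≤ a m ∨ a m ≤ c ∧ c ≤ a 0
    · obtain ⟨i, hi, rfl⟩ := exists_eq_of_abs_sub_le_one (fun i hi => ha i (by omega)) hm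
      exact ⟨i, by omega, rfl⟩
    · have := abs_le.1 (ha m (by omega))
      exact ⟨m + 1, le_rfl, by omega⟩

theorem exists_add_eq_add_of_unit_steps {g : ℕ → ℕ} {n k : ℕ}
    (hg : ∀ j < 2 * n, g j ≤ g (j + 1) ∧ g (j + 1) ≤ g j + 1) (htot : g (2 * n) = g 0 + 2 * k) :
    ∃ i ≤ n, g (i + n) = g i + k := by
  obtain ⟨i, hi, h⟩ := exists_eq_of_abs_sub_le_one (a := fun i => (g (i + n) : ℤ) - g i) (c := k)
    (m := n) (fun i hi => by
      have h1 := hg i (by omega)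
      have h2 := hg (i + n) (by omega)
      rw [abs_le, show i + 1 + n = i + n + 1 by omega]; omega)
    (by simp only [zero_add, show n + n = 2 * n by omega]; omega)
  exact ⟨i, hi, by omega⟩

theorem Finset.eq_one_of_sum_eq_card {ι : Type*} {s : Finset ι} {f : ι → ℕ}
    (hf : ∀ i ∈ s, f i ≤ 2) (hsum : ∑ i ∈ s, f i = #s)
    (h : ∀ i ∈ s, ∀ j ∈ s, f i = 2 → f j ≠ 0) : ∀ i ∈ s, f i = 1 := by
  have hcard : ∑ _i ∈ s, 1 = #s := by simp
  by_cases htwo : ∃ i ∈ s, f i = 2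
  · obtain ⟨i, hi, hfi⟩ := htwo
    have := sum_lt_sum (fun j hj => Nat.one_le_iff_ne_zero.2 (h i hi j hj hfi)) ⟨i, hi, by omega⟩
    omega
  · push Not at htwo
    have hle : ∀ i ∈ s, f i ≤ 1 := fun i hi => by have := hf i hi; have := htwo i hi; omega
    exact (sum_eq_sum_iff_of_le hle).1 (hsum.trans hcard.symm)

section LinearOrder

variable {α : Type*} [LinearOrder α]

theorem Finset.card_filter_lt_add_card_filter_Ioo (u : Finset α) {a b : α} (hab : a ≤ b)
    (ha : a ∉ u) :
    #(u.filter (· < a)) + #(u.filter fun z => a < z ∧ z < b) = #(u.filter (· < b)) := by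
  rw [← card_union_of_disjoint (disjoint_filter.2 fun z _ h h' => (h.trans h'.1).false),
    filter_union_right]
  congr 1
  refine filter_congr fun z hz => ?_
  have : z ≠ a := fun h => ha (h ▸ hz)
  constructor
  · rintro (h | h)
    · exact h.trans_le hab
    · exact h.2
  · intro h
    exact (lt_or_gt_of_ne this).imp_right fun h' => ⟨h', h⟩

theorem lt_of_card_filter_lt_lt {u : Finset α} {a b : α}
    (h : #(u.filter (· < a)) < #(u.filter (· < b))) : a < b := by
  by_contra! hba
  exact h.not_ge (card_le_card fun z hz => by
    rw [mem_filter] at hz ⊢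
    exact ⟨hz.1, hz.2.trans_le hba⟩)

variable [DenselyOrdered α]

theorem Finset.exists_gt_forall_lt_of_lt (u : Finset α) {a c : α} (hac : a < c) :
    ∃ t, a < t ∧ t < c ∧ ∀ z ∈ u, a < z → t < z := by
  classical
  set m := (insert c (u.filter (a < ·))).min' (insert_nonempty _ _)
  have ham : a < m := by
    rw [lt_min'_iff]
    simp only [mem_insert, mem_filter, forall_eq_or_imp]
    exact ⟨hac, fun z hz => hz.2⟩
  obtain ⟨t, hat, htm⟩ := _root_.exists_between ham
  exact ⟨t, hat, htm.trans_le (min'_le _ _ (mem_insert_self _ _)),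
    fun z hz haz => htm.trans_le (min'_le _ _ (mem_insert_of_mem (mem_filter.2 ⟨hz, haz⟩)))⟩

theorem Finset.exists_card_filter_lt_eq (u : Finset α) {b c : α} (hbc : b < c)
    (hb : ∀ z ∈ u, b < z) (hc : ∀ z ∈ u, z < c) :
    ∀ {j : ℕ}, j ≤ #u → ∃ t, b ≤ t ∧ t < c ∧ t ∉ u ∧ #(u.filter (· < t)) = j
  | 0, _ => ⟨b, le_rfl, hbc, fun h => (hb b h).false,
      card_eq_zero.2 (filter_eq_empty_iff.2 fun z hz h => (hb z hz).asymm h)⟩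
  | j + 1, hj => by
    classical
    obtain ⟨t, hbt, htc, htu, hcard⟩ := u.exists_card_filter_lt_eq hbc hb hc (j := j) (by omega)
    have hne : (u.filter (t < ·)).Nonempty := by
      by_contra! h
      have : u.filter (· < t) = u := filter_true_of_mem fun z hz =>
        lt_of_le_of_ne (not_lt.1 fun h' => (filter_eq_empty_iff.1 h hz) h')
          fun h' => htu (h' ▸ hz)
      rw [this] at hcard
      omega
    set m := (u.filter (t < ·)).min' hne
    have hm : m ∈ u ∧ t < m := mem_filter.1 (min'_mem _ hne)
    obtain ⟨t', hmt', ht'c, hgap⟩ := u.exists_gt_forall_lt_of_lt (hc m hm.1)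
    refine ⟨t', hbt.trans (hm.2.trans hmt').le, ht'c, fun h => (hgap t' h hmt').false, ?_⟩
    have : u.filter (· < t') = insert m (u.filter (· < t)) := by
      ext z
      simp only [mem_filter, mem_insert]
      constructor
      · rintro ⟨hz, hzt'⟩
        refine or_iff_not_imp_right.2 fun hzt => ?_
        have htz : t < z := lt_of_le_of_ne (not_lt.1 fun h => hzt ⟨hz, h⟩) fun h => htu (h ▸ hz)
        refine le_antisymm (not_lt.1 fun hmz => (hgap z hz hmz).asymm hzt') ?_
        exact min'_le _ _ (mem_filter.2 ⟨hz, htz⟩)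
      · rintro (rfl | ⟨hz, hzt⟩)
        · exact ⟨hm.1, hmt'⟩
        · exact ⟨hz, hzt.trans (hm.2.trans hmt')⟩
    rw [this, card_insert_of_notMem fun h => (mem_filter.1 h).2.asymm hm.2, hcard]

theorem Finset.exists_balanced_window {s s' : Finset α} (hs' : s' ⊆ s) {n k : ℕ} (hn : 0 < n)
    (hs : #s = 2 * n) (hk : #s' = 2 * k) {b c : α} (hb : ∀ z ∈ s, b < z) (hc : ∀ z ∈ s, z < c) :
    ∃ x y, b ≤ x ∧ x < y ∧ y < c ∧ x ∉ s ∧ y ∉ s ∧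
      #(s.filter fun z => x < z ∧ z < y) = n ∧ #(s'.filter fun z => x < z ∧ z < y) = k := by
  classical
  obtain ⟨z₀, hz₀⟩ : s.Nonempty := card_pos.1 (by omega)
  choose t hbt htc hts hcard using fun j =>
    s.exists_card_filter_lt_eq ((hb z₀ hz₀).trans (hc z₀ hz₀)) hb hc (j := min j (2 * n)) (by omega)
  set g : ℕ → ℕ := fun j => #(s'.filter (· < t j))
  have hlt : ∀ {i j}, i < j → j ≤ 2 * n → t i < t j := fun {i j} hij hj =>
    lt_of_card_filter_lt_lt (by rw [hcard, hcard]; omega)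
  have hwin : ∀ {i j}, i < j → j ≤ 2 * n →
      #(s.filter fun z => t i < z ∧ z < t j) = j - i ∧
        g i + #(s'.filter fun z => t i < z ∧ z < t j) = g j := fun {i j} hij hj =>
    ⟨by have := s.card_filter_lt_add_card_filter_Ioo (hlt hij hj).le (hts i)
        rw [hcard, hcard] at this; omega,
      s'.card_filter_lt_add_card_filter_Ioo (hlt hij hj).le fun h => hts i (hs' h)⟩
  have hsteps : ∀ j < 2 * n, g j ≤ g (j + 1) ∧ g (j + 1) ≤ g j + 1 := fun j hj => by
    obtain ⟨h₁, h₂⟩ := hwin (by omega : j < j + 1) hj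
    have := card_le_card (filter_subset_filter (fun z => t j < z ∧ z < t (j + 1)) hs')
    omega
  have h₀ : g 0 = 0 := by
    have := card_le_card (filter_subset_filter (· < t 0) hs')
    rw [hcard] at this
    exact Nat.le_zero.1 (this.trans_eq (Nat.zero_min _))
  have h₂ₙ : g (2 * n) = 2 * k := by
    have hall := card_filter_eq_iff.1 ((hcard (2 * n)).trans (by omega : min (2 * n) (2 * n) = #s))
    rw [← hk]
    exact congrArg card (filter_true_of_mem fun z hz => hall z (hs' hz))
  obtain ⟨i, hi, hgi⟩ := exists_add_eq_add_of_unit_steps (k := k) hsteps (by omega)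
  obtain ⟨hW, hW'⟩ := hwin (by omega : i < i + n) (by omega)
  exact ⟨t i, t (i + n), hbt i, hlt (by omega) (by omega), htc _, hts _, hts _, by omega, by omega⟩

end LinearOrder

section CircularOrder

variable {α : Type*} [CircularOrder α] {a a' b c d x y : α}

theorem sbtw_of_not_sbtw (hxa : x ≠ a) (hay : a ≠ y) (hyx : y ≠ x) (h : ¬sbtw x a y) :
    sbtw y a x :=
  sbtw_iff_not_btw.2 fun h' => by
    rcases h'.antisymm (btw_iff_not_sbtw.2 h) with h | h | h <;> contradiction

theorem sbtw_of_sbtw_of_sbtw (ha : sbtw x a y) (hb : sbtw y b x) : sbtw a y b :=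
  sbtw_cyclic_left ((sbtw_cyclic_left hb).trans_left ha)

theorem sbtw_iff_sbtw_of_sbtw (ha : sbtw x a y) (ha' : sbtw x a' y) (hc : sbtw y c x)
    (hd : sbtw y d x) : sbtw c a d ↔ sbtw c a' d := by
  have key : ∀ {a c d}, sbtw x a y → sbtw y d x → sbtw y c d → sbtw d a c := fun ha hd hcd =>
    sbtw_trans_right ((sbtw_cyclic_left hd).trans_left ha) (sbtw_cyclic_right hcd)
  rcases eq_or_ne c d with rfl | hcd
  · exact iff_of_false sbtw_irrefl_left_right sbtw_irrefl_left_right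
  by_cases hycd : sbtw y c d
  · exact iff_of_false (sbtw_asymm (key ha hd hycd)) (sbtw_asymm (key ha' hd hycd))
  · have hyc : y ≠ c := by rintro rfl; exact sbtw_irrefl_left hc
    have hdy : d ≠ y := by rintro rfl; exact sbtw_irrefl_left hd
    have hydc := sbtw_cyclic_right (sbtw_of_not_sbtw hyc hcd hdy hycd)
    exact iff_of_true (key ha hc hydc) (key ha' hc hydc)

end CircularOrder

instance : Infinite Circ :=
  Infinite.of_injective (fun x : Set.Ico (0 : ℝ) 1 => ((x : ℝ) : Circ)) fun x y h =>
    Subtype.ext <| (AddCircle.coe_eq_coe_iff_of_mem_Ico (a := 0) (by simp) (by simp)).1 h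

theorem sbtw_coe_of_lt {x y z : ℝ} (hxy : x < y) (hyz : y < z) (hzx : z < x + 1) :
    sbtw (x : Circ) (y : Circ) (z : Circ) := by
  rw [sbtw_iff_btw_not_btw, QuotientAddGroup.btw_coe_iff, QuotientAddGroup.btw_coe_iff,
    (toIcoMod_eq_self _).2 ⟨hxy.le, by linarith⟩, (toIocMod_eq_self _).2 ⟨by linarith, hzx.le⟩,
    ← toIcoMod_add_right, ← toIocMod_add_right, (toIcoMod_eq_self _).2 ⟨by linarith, by linarith⟩,
    (toIocMod_eq_self _).2 ⟨by linarith, by linarith⟩]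
  constructor <;> linarith

theorem sbtw_coe_iff {b x y z : ℝ} (hx : x ∈ Set.Ico b (b + 1)) (hy : y ∈ Set.Ico b (b + 1))
    (hz : z ∈ Set.Ico b (b + 1)) :
    sbtw (x : Circ) (y : Circ) (z : Circ) ↔ x < y ∧ y < z ∨ y < z ∧ z < x ∨ z < x ∧ x < y := by
  obtain ⟨hx0, hx1⟩ := hx
  obtain ⟨hy0, hy1⟩ := hy
  obtain ⟨hz0, hz1⟩ := hz
  constructor
  · intro h
    have hxy : x ≠ y := by rintro rfl; exact sbtw_irrefl_left h
    have hyz : y ≠ z := by rintro rfl; exact sbtw_irrefl_right h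
    have hzx : z ≠ x := by rintro rfl; exact sbtw_irrefl_left_right h
    -- in each of the three reverse cyclic orders, `sbtw z y x` contradicts `h`
    rcases hxy.lt_or_gt with hxy | hxy <;> rcases hyz.lt_or_gt with hyz | hyz <;>
      rcases hzx.lt_or_gt with hzx | hzx
    all_goals first
      | (left; exact ⟨‹_›, ‹_›⟩) | (right; left; exact ⟨‹_›, ‹_›⟩) | (right; right; exact ⟨‹_›, ‹_›⟩)
      | (exfalso; linarith)
      | exact absurd h (sbtw_asymm (sbtw_coe_of_lt ‹_› ‹_› (by linarith)))
      | exact absurd h (sbtw_asymm (sbtw_cyclic_left (sbtw_coe_of_lt ‹_› ‹_› (by linarith))))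
      | exact absurd h (sbtw_asymm (sbtw_cyclic_right (sbtw_coe_of_lt ‹_› ‹_› (by linarith))))
  · rintro (⟨h1, h2⟩ | ⟨h1, h2⟩ | ⟨h1, h2⟩)
    · exact sbtw_coe_of_lt h1 h2 (by linarith)
    · exact sbtw_cyclic_right (sbtw_coe_of_lt h1 h2 (by linarith))
    · exact sbtw_cyclic_left (sbtw_coe_of_lt h1 h2 (by linarith))

theorem sbtw_coe_left_coe_right_iff {b x y : ℝ} (hx : x ∈ Set.Ico b (b + 1))
    (hy : y ∈ Set.Ico b (b + 1)) (hxy : x < y) (z : Circ) :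
    sbtw (x : Circ) z (y : Circ) ↔
      x < AddCircle.equivIco 1 b z ∧ (AddCircle.equivIco 1 b z : ℝ) < y := by
  have h := sbtw_coe_iff hx (AddCircle.equivIco 1 b z).2 hy
  rw [AddCircle.coe_equivIco] at h
  rw [h]
  constructor
  · rintro (h | h | h)
    · exact h
    · linarith [h.2]
    · linarith [h.1]
  · exact Or.inl

open scoped Classical in
theorem exists_balanced_arc {S S' : Finset Circ} (hS' : S' ⊆ S) {n k : ℕ} (hn : 0 < n)
    (hS : #S = 2 * n) (hk : #S' = 2 * k) :
    ∃ x y : Circ, x ≠ y ∧ x ∉ S ∧ y ∉ S ∧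
      #(S.filter fun z => sbtw x z y) = n ∧ #(S'.filter fun z => sbtw x z y) = k := by
  obtain ⟨b, hb⟩ : ∃ b : ℝ, (b : Circ) ∉ S := by
    obtain ⟨z, hz⟩ := S.exists_notMem
    obtain ⟨b, rfl⟩ := QuotientAddGroup.mk_surjective z
    exact ⟨b, hz⟩
  set L : Circ → ℝ := fun z => (AddCircle.equivIco 1 b z : ℝ)
  have hLmem : ∀ z, L z ∈ Set.Ico b (b + 1) := fun z => (AddCircle.equivIco 1 b z).2
  have hLcoe : ∀ z, ((L z : ℝ) : Circ) = z := fun z => AddCircle.coe_equivIco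
  have hL : Function.Injective L := fun z w h => by rw [← hLcoe z, ← hLcoe w, h]
  have hLb : ∀ z ∈ S, b < L z := fun z hz =>
    (hLmem z).1.lt_of_ne fun h => hb (by rwa [h, hLcoe])
  obtain ⟨X, Y, hbX, hXY, hYc, hXS, hYS, hcard, hcard'⟩ :=
    exists_balanced_window (image_subset_image hS') hn
      (by rw [card_image_of_injective _ hL, hS]) (by rw [card_image_of_injective _ hL, hk])
      (b := b) (c := b + 1) (by simpa using hLb) (by simpa using fun z _ => (hLmem z).2)
  have hX : X ∈ Set.Ico b (b + 1) := ⟨hbX, by linarith⟩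
  have hY : Y ∈ Set.Ico b (b + 1) := ⟨by linarith, hYc⟩
  have hcount : ∀ T : Finset Circ,
      #(T.filter fun z => sbtw (X : Circ) z Y) = #((T.image L).filter fun z => X < z ∧ z < Y) :=
    fun T => by
      rw [filter_image, card_image_of_injective _ hL]
      simp only [sbtw_coe_left_coe_right_iff hX hY hXY, L]
  have hnotMem : ∀ {Z : ℝ}, Z ∈ Set.Ico b (b + 1) → Z ∉ S.image L → (Z : Circ) ∉ S :=
    fun hZ hZS h => hZS (mem_image.2 ⟨_, h, AddCircle.equivIco_coe_of_mem hZ⟩)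
  exact ⟨X, Y, fun h => hXY.ne ((AddCircle.coe_eq_coe_iff_of_mem_Ico hX hY).1 h),
    hnotMem hX hXS, hnotMem hY hYS, (hcount S).trans hcard, (hcount S').trans hcard'⟩

namespace CircleRep

variable {V : Type} {G : SimpleGraph V} (R : CircleRep V G)

noncomputable def ends (v : V) : Finset Circ := {R.p v, R.q v}

open scoped Classical in
noncomputable def arcCount (x y : Circ) (v : V) : ℕ := #((R.ends v).filter fun z => sbtw x z y)

theorem p_ne_q (v w : V) : R.p v ≠ R.q w := fun h => Sum.inl_ne_inr (R.inj h)

theorem disjoint_ends {v w : V} (h : v ≠ w) : Disjoint (R.ends v) (R.ends w) := by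
  have hp : ∀ {v w}, v ≠ w → R.p v ≠ R.p w := fun h h' => h (Sum.inl_injective (R.inj h'))
  have hq : ∀ {v w}, v ≠ w → R.q v ≠ R.q w := fun h h' => h (Sum.inr_injective (R.inj h'))
  simp only [ends, disjoint_insert_left, disjoint_insert_right, disjoint_singleton, mem_insert,
    mem_singleton, not_or]
  exact ⟨⟨(hp h).symm, R.p_ne_q w v⟩, R.p_ne_q v w, hq h⟩

theorem card_biUnion_ends (U : Finset V) : #(U.biUnion R.ends) = 2 * #U := by
  rw [card_biUnion fun v _ w _ h => R.disjoint_ends h, mul_comm, ← smul_eq_mul, ← sum_const]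
  exact sum_congr rfl fun v _ => card_pair (R.p_ne_q v v)

open scoped Classical in
theorem card_filter_biUnion_ends (U : Finset V) (x y : Circ) :
    #((U.biUnion R.ends).filter fun z => sbtw x z y) = ∑ v ∈ U, R.arcCount x y v := by
  rw [filter_biUnion, card_biUnion fun v _ w _ h =>
    (R.disjoint_ends h).mono (filter_subset _ _) (filter_subset _ _)]
  rfl

open scoped Classical in
theorem arcCount_eq (x y : Circ) (v : V) : R.arcCount x y v =
    (if sbtw x (R.p v) y then 1 else 0) + (if sbtw x (R.q v) y then 1 else 0) := by
  rw [arcCount, card_filter, ends, sum_pair (R.p_ne_q v v)]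

theorem notMem_ends {z : Circ} {v : V} : z ∉ R.ends v ↔ z ≠ R.p v ∧ z ≠ R.q v := by
  simp [ends]

theorem arcCount_le_two (x y : Circ) (v : V) : R.arcCount x y v ≤ 2 := by
  rw [arcCount_eq]
  split_ifs <;> omega

variable {R} {x y : Circ}

theorem not_adj_of_arcCount {v w : V} (hxy : x ≠ y) (hx : x ∉ R.ends w) (hy : y ∉ R.ends w)
    (hv : R.arcCount x y v = 2) (hw : R.arcCount x y w = 0) : ¬G.Adj v w := by
  rw [arcCount_eq] at hv hw
  obtain ⟨hpv, hqv⟩ : sbtw x (R.p v) y ∧ sbtw x (R.q v) y := by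
    split_ifs at hv <;> first | omega | exact ⟨‹_›, ‹_›⟩
  obtain ⟨hpw, hqw⟩ : ¬sbtw x (R.p w) y ∧ ¬sbtw x (R.q w) y := by
    split_ifs at hw <;> first | omega | exact ⟨‹_›, ‹_›⟩
  obtain ⟨hxp, hxq⟩ := R.notMem_ends.1 hx
  obtain ⟨hyp, hyq⟩ := R.notMem_ends.1 hy
  intro hadj
  exact (xor_iff_not_iff _ _).1 ((R.adj v w).1 hadj).2 (sbtw_iff_sbtw_of_sbtw hpv hqv
    (sbtw_of_not_sbtw hxp hyp.symm hxy.symm hpw) (sbtw_of_not_sbtw hxq hyq.symm hxy.symm hqw))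

theorem satChord_pair {v : V} (hxy : x ≠ y) (hx : x ∉ R.ends v) (hy : y ∉ R.ends v)
    (hv : R.arcCount x y v = 1) : R.SatChord {x, y} v := by
  obtain ⟨hxp, hxq⟩ := R.notMem_ends.1 hx
  obtain ⟨hyp, hyq⟩ := R.notMem_ends.1 hy
  rw [arcCount_eq] at hv
  simp only [SatChord, ArcSet, if_true, Bool.false_eq_true, if_false, mem_insert, mem_singleton,
    exists_eq_or_imp, exists_eq_left]
  by_cases hp : sbtw x (R.p v) y
  · have hq := sbtw_of_not_sbtw hxq hyq.symm hxy.symm fun hq => by simp [hp, hq] at hv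
    exact ⟨Or.inr (sbtw_of_sbtw_of_sbtw hp hq), Or.inl (sbtw_of_sbtw_of_sbtw hq hp)⟩
  · have hp' := sbtw_of_not_sbtw hxp hyp.symm hxy.symm hp
    have hq : sbtw x (R.q v) y := by_contra fun hq => by simp [hp, hq] at hv
    exact ⟨Or.inl (sbtw_of_sbtw_of_sbtw hp' hq), Or.inr (sbtw_of_sbtw_of_sbtw hq hp')⟩

theorem arcCount_eq_one_of_isClique {U : Finset V} (hU : G.IsClique (U : Set V)) (hxy : x ≠ y)
    (hx : ∀ v, x ∉ R.ends v) (hy : ∀ v, y ∉ R.ends v)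
    (hsum : ∑ v ∈ U, R.arcCount x y v = #U) : ∀ v ∈ U, R.arcCount x y v = 1 :=
  eq_one_of_sum_eq_card (fun v _ => R.arcCount_le_two x y v) hsum fun v hv w hw h₂ h₀ =>
    not_adj_of_arcCount hxy (hx w) (hy w) h₂ h₀ (hU hv hw fun h => by subst h; omega)

theorem goodCorners_pair (hxy : x ≠ y) (hx : ∀ v, x ∉ R.ends v) (hy : ∀ v, y ∉ R.ends v)
    (h : ∀ v, R.arcCount x y v = 1) : R.GoodCorners {x, y} := by
  refine ⟨?_, fun v => satChord_pair hxy (hx v) (hy v) (h v)⟩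
  simp only [mem_insert, mem_singleton]
  rintro t (rfl | rfl) v
  exacts [R.notMem_ends.1 (hx v), R.notMem_ends.1 (hy v)]

end CircleRep

/-- every cobipartite circle graph is a permutation graph. -/
theorem stmt6 {V : Type} [Fintype V] (G : SimpleGraph V)
    (hcirc : Nonempty (CircleRep V G))
    (hco : ∃ A : Set V, (∀ u ∈ A, ∀ v ∈ A, u ≠ v → G.Adj u v) ∧
      (∀ u ∉ A, ∀ v ∉ A, u ≠ v → G.Adj u v)) :
    IsPermutationGraph G := by
  classical
  obtain ⟨R⟩ := hcirc
  obtain ⟨A, hA, hB⟩ := hco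
  rcases isEmpty_or_nonempty V with hV | hV
  · obtain ⟨z, hz⟩ := exists_ne (0 : Circ)
    exact ⟨R, {0, z}, card_pair hz.symm, fun _ _ v => isEmptyElim v, isEmptyElim⟩
  obtain ⟨x, y, hxy, hx, hy, hsum, hsumA⟩ :=
    exists_balanced_arc (biUnion_subset_biUnion_of_subset_left R.ends (subset_univ {v | v ∈ A}))
      univ_nonempty.card_pos (R.card_biUnion_ends univ) (R.card_biUnion_ends _)
  rw [R.card_filter_biUnion_ends] at hsum hsumA
  have hx' : ∀ v, x ∉ R.ends v := fun v h => hx (mem_biUnion.2 ⟨v, mem_univ v, h⟩)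
  have hy' : ∀ v, y ∉ R.ends v := fun v h => hy (mem_biUnion.2 ⟨v, mem_univ v, h⟩)
  have hsumB : ∑ v ∈ {v | v ∉ A}, R.arcCount x y v = #{v | v ∉ A} := by
    have := sum_filter_add_sum_filter_not univ (· ∈ A) (R.arcCount x y)
    have := card_filter_add_card_filter_not (s := univ) (· ∈ A)
    omega
  refine ⟨R, {x, y}, card_pair hxy, R.goodCorners_pair hxy hx' hy' fun v => ?_⟩
  by_cases hv : v ∈ A
  · exact R.arcCount_eq_one_of_isClique
      (fun u hu w hw => hA u (by simpa using hu) w (by simpa using hw)) hxy hx' hy' hsumA v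
      (by simpa using hv)
  · exact R.arcCount_eq_one_of_isClique
      (fun u hu w hw => hB u (by simpa using hu) w (by simpa using hw)) hxy hx' hy' hsumB v
      (by simpa using hv)
end

section
/- For any circle graph G, ψ(G) ≤ α(G) + 1, where α(G) is the maximum size of an independent set in G. -/
open SimpleGraph

/-! Cut the circle at a point `x` that is no chord endpoint. Reading positions in `[x, x + 1)`
turns the chord of `v` into a real interval `(lo v, hi v)`, one arc of the chord being the points
of this interval and the other containing `x`. So `x` together with any set of points stabbing all
the intervals is a good set of corners. The greedy algorithm (stab the interval with leftmost right
end as late as possible, discard the intervals it hits, recurse) yields a stabbing set no larger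
than a family of pairwise disjoint intervals, and chords with disjoint intervals do not cross. -/

open Set AddCircle

namespace AddCircle

variable {p : ℝ} [hp : Fact (0 < p)] {x a b e : ℝ}

theorem sbtw_coe_iff_mem_Ioo (hab : a < b) (ha : a ∈ Ico x (x + p)) (hb : b ∈ Ico x (x + p))
    (he : e ∈ Ico x (x + p)) : sbtw (a : AddCircle p) e b ↔ e ∈ Ioo a b := by
  obtain ⟨ha₀, ha₁⟩ := ha; obtain ⟨hb₀, hb₁⟩ := hb; obtain ⟨he₀, he₁⟩ := he
  have hba : toIocMod hp.out b a = a + p := by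
    rw [← toIocMod_add_right]; exact (toIocMod_eq_self _).2 ⟨by linarith, by linarith⟩
  rw [sbtw_iff_not_btw, QuotientAddGroup.btw_coe_iff, hba]
  rcases lt_or_ge e b with heb | hbe
  · rw [← toIcoMod_add_right, (toIcoMod_eq_self _).2 ⟨by linarith, by linarith⟩]
    simp only [not_le, add_lt_add_iff_right, mem_Ioo, heb, and_true]
  · rw [(toIcoMod_eq_self _).2 ⟨hbe, by linarith⟩]
    exact iff_of_false (not_not.2 (by linarith)) fun h => h.2.not_ge hbe

theorem sbtw_coe_iff_notMem_Icc (hab : a < b) (ha : a ∈ Ico x (x + p)) (hb : b ∈ Ico x (x + p))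
    (he : e ∈ Ico x (x + p)) : sbtw (b : AddCircle p) e a ↔ e ∉ Icc a b := by
  obtain ⟨ha₀, ha₁⟩ := ha; obtain ⟨hb₀, hb₁⟩ := hb; obtain ⟨he₀, he₁⟩ := he
  rw [sbtw_iff_not_btw, QuotientAddGroup.btw_coe_iff,
    (toIocMod_eq_self _).2 ⟨hab, by linarith⟩, not_iff_not]
  rcases lt_or_ge e a with hea | hae
  · rw [← toIcoMod_add_right, (toIcoMod_eq_self _).2 ⟨by linarith, by linarith⟩]
    exact iff_of_false (fun h => by linarith) fun h => h.1.not_gt hea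
  · rw [(toIcoMod_eq_self _).2 ⟨hae, by linarith⟩]
    exact ⟨fun h => ⟨hae, h⟩, And.right⟩

theorem sbtw_iff_of_mem_uIoo {z₁ z₂ z₃ : AddCircle p}
    (h : (equivIco p x z₂ : ℝ) ∈ uIoo (equivIco p x z₁ : ℝ) (equivIco p x z₃)) :
    sbtw z₁ z₂ z₃ ↔ (equivIco p x z₁ : ℝ) < equivIco p x z₃ := by
  obtain ⟨⟨a, ha⟩, rfl⟩ := (equivIco p x).symm.surjective z₁
  obtain ⟨⟨e, he⟩, rfl⟩ := (equivIco p x).symm.surjective z₂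
  obtain ⟨⟨b, hb⟩, rfl⟩ := (equivIco p x).symm.surjective z₃
  simp only [Equiv.apply_symm_apply] at h ⊢
  rcases lt_trichotomy a b with hab | rfl | hba
  · rw [uIoo_of_lt hab] at h
    exact (sbtw_coe_iff_mem_Ioo hab ha hb he).trans (iff_of_true h hab)
  · simp at h
  · rw [uIoo_of_gt hba] at h
    exact (sbtw_coe_iff_notMem_Icc hba hb ha he).trans
      (iff_of_false (not_not.2 (Ioo_subset_Icc_self h)) hba.not_gt)

theorem sbtw_iff_of_notMem_uIcc {z₁ z₂ z₃ : AddCircle p}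
    (h : (equivIco p x z₂ : ℝ) ∉ uIcc (equivIco p x z₁ : ℝ) (equivIco p x z₃)) :
    sbtw z₁ z₂ z₃ ↔ (equivIco p x z₃ : ℝ) < equivIco p x z₁ := by
  obtain ⟨⟨a, ha⟩, rfl⟩ := (equivIco p x).symm.surjective z₁
  obtain ⟨⟨e, he⟩, rfl⟩ := (equivIco p x).symm.surjective z₂
  obtain ⟨⟨b, hb⟩, rfl⟩ := (equivIco p x).symm.surjective z₃
  simp only [Equiv.apply_symm_apply] at h ⊢
  rcases lt_trichotomy a b with hab | rfl | hba
  · rw [uIcc_of_lt hab] at h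
    exact (sbtw_coe_iff_mem_Ioo hab ha hb he).trans
      (iff_of_false (fun h' => h (Ioo_subset_Icc_self h')) hab.not_gt)
  · exact iff_of_false sbtw_irrefl_left_right (lt_irrefl a)
  · rw [uIcc_of_gt hba] at h
    exact (sbtw_coe_iff_notMem_Icc hba hb ha he).trans (iff_of_true h hba)

end AddCircle

theorem exists_stabbing_finset_card_le_of_pairwise_disjoint {ι : Type*} (A B : ι → ℝ)
    (hAB : ∀ i, A i < B i) {E : Set ℝ} (hE : E.Finite) (S : Finset ι) :
    ∃ T : Finset ℝ, ∃ I ⊆ S, T.card ≤ I.card ∧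
      (∀ s ∈ T, s ∉ E ∧ ∃ i ∈ S, s ∈ Ioo (A i) (B i)) ∧
      (∀ i ∈ S, ∃ s ∈ T, s ∈ Ioo (A i) (B i)) ∧
      ∀ i ∈ I, ∀ j ∈ I, i ≠ j → B i ≤ A j ∨ B j ≤ A i := by
  classical
  induction S using Finset.strongInduction with
  | H S ih =>
  rcases S.eq_empty_or_nonempty with rfl | hS
  · exact ⟨∅, ∅, subset_rfl, by simp, by simp, by simp, by simp⟩
  obtain ⟨i₀, hi₀, hmin⟩ := S.exists_min_image B hS
  set L := S.filter (A · < B i₀)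
  have hL : L.Nonempty := ⟨i₀, Finset.mem_filter.2 ⟨hi₀, hAB i₀⟩⟩
  have hmax : L.sup' hL A < B i₀ := (Finset.sup'_lt_iff hL).2 fun i hi => (Finset.mem_filter.1 hi).2
  -- `s` follows every left end below `B i₀`; as `B i₀` is the least right end, `s` stabs every
  -- interval starting before `B i₀`, and the others lie to the right of `s`.
  obtain ⟨s, ⟨hms, hsB⟩, hsE⟩ := ((Set.Ioo_infinite hmax).sdiff hE).nonempty
  set S' := S.filter (B i₀ ≤ A ·)
  have hi₀S' : i₀ ∉ S' := fun h => (Finset.mem_filter.1 h).2.not_gt (hAB i₀)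
  have hS' : S' ⊂ S := Finset.ssubset_iff_subset_ne.2
    ⟨Finset.filter_subset _ _, fun h => hi₀S' (h ▸ hi₀)⟩
  obtain ⟨T, I, hIS, hcard, hT, hcover, hdisj⟩ := ih S' hS'
  have hAs : ∀ i ∈ L, A i < s := fun i hi => (Finset.le_sup' A hi).trans_lt hms
  refine ⟨insert s T, insert i₀ I, Finset.insert_subset hi₀ (hIS.trans hS'.subset), ?_, ?_, ?_, ?_⟩
  · rw [Finset.card_insert_of_notMem (fun h => hi₀S' (hIS h))]
    exact (Finset.card_insert_le _ _).trans (by omega)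
  · simp only [Finset.mem_insert, forall_eq_or_imp]
    exact ⟨⟨hsE, i₀, hi₀, hAs i₀ (Finset.mem_filter.2 ⟨hi₀, hAB i₀⟩), hsB⟩,
      fun t ht => (hT t ht).imp_right fun ⟨i, hi, hti⟩ => ⟨i, hS'.subset hi, hti⟩⟩
  · intro i hi
    by_cases hiL : A i < B i₀
    · exact ⟨s, Finset.mem_insert_self _ _, hAs i (Finset.mem_filter.2 ⟨hi, hiL⟩),
        hsB.trans_le (hmin i hi)⟩
    · obtain ⟨t, ht, hti⟩ := hcover i (Finset.mem_filter.2 ⟨hi, not_lt.1 hiL⟩)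
      exact ⟨t, Finset.mem_insert_of_mem ht, hti⟩
  · have hfirst : ∀ j ∈ I, B i₀ ≤ A j := fun j hj => (Finset.mem_filter.1 (hIS hj)).2
    simp only [Finset.mem_insert]
    rintro i (rfl | hi) j (rfl | hj) hij
    · exact absurd rfl hij
    · exact Or.inl (hfirst j hj)
    · exact Or.inr (hfirst i hi)
    · exact hdisj i hi j hj hij

namespace CircleRep

variable {V : Type} {G : SimpleGraph V} (R : CircleRep V G) (x : ℝ)

noncomputable def lo (v : V) : ℝ := min (equivIco 1 x (R.p v) : ℝ) (equivIco 1 x (R.q v))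

noncomputable def hi (v : V) : ℝ := max (equivIco 1 x (R.p v) : ℝ) (equivIco 1 x (R.q v))

noncomputable def endpointPos (e : V ⊕ V) : ℝ := equivIco 1 x (Sum.elim R.p R.q e)

theorem endpointPos_injective : Function.Injective (R.endpointPos x) :=
  fun _ _ h => R.inj ((equivIco 1 x).injective (Subtype.ext h))

theorem lo_lt_hi (v : V) : R.lo x v < R.hi x v :=
  min_lt_max.2 fun h => Sum.inl_ne_inr (R.endpointPos_injective x h)

theorem hi_lt_lo_of_le {u v : V} (huv : u ≠ v) (h : R.hi x u ≤ R.lo x v) :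
    R.hi x u < R.lo x v := by
  refine h.lt_of_ne fun heq => ?_
  have hinj := R.endpointPos_injective x
  rcases max_choice (equivIco 1 x (R.p u) : ℝ) (equivIco 1 x (R.q u)) with hu | hu <;>
    rcases min_choice (equivIco 1 x (R.p v) : ℝ) (equivIco 1 x (R.q v)) with hv | hv <;>
    rw [hi, lo, hu, hv] at heq
  · exact huv (Sum.inl_injective (hinj (a₁ := .inl u) (a₂ := .inl v) heq))
  · exact Sum.inl_ne_inr (hinj (a₁ := .inl u) (a₂ := .inr v) heq)
  · exact Sum.inr_ne_inl (hinj (a₁ := .inr u) (a₂ := .inl v) heq)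
  · exact huv (Sum.inr_injective (hinj (a₁ := .inr u) (a₂ := .inr v) heq))

theorem Ioo_lo_hi_subset (v : V) : Ioo (R.lo x v) (R.hi x v) ⊆ Ico x (x + 1) :=
  fun _ hs => ⟨(le_min (equivIco 1 x _).2.1 (equivIco 1 x _).2.1).trans hs.1.le,
    hs.2.trans (max_lt (equivIco 1 x _).2.2 (equivIco 1 x _).2.2)⟩

theorem not_adj_of_hi_le_lo {u v : V} (h : R.hi x u ≤ R.lo x v) : ¬ G.Adj u v := by
  rintro hadj
  obtain ⟨huv, hcross⟩ := (R.adj u v).1 hadj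
  have hlt := R.hi_lt_lo_of_le x huv h
  have hp : (equivIco 1 x (R.p u) : ℝ) ∉ uIcc (equivIco 1 x (R.p v) : ℝ) (equivIco 1 x (R.q v)) :=
    fun hmem => hmem.1.not_gt ((le_max_left _ _).trans_lt hlt)
  have hq : (equivIco 1 x (R.q u) : ℝ) ∉ uIcc (equivIco 1 x (R.p v) : ℝ) (equivIco 1 x (R.q v)) :=
    fun hmem => hmem.1.not_gt ((le_max_right _ _).trans_lt hlt)
  rw [sbtw_iff_of_notMem_uIcc hp, sbtw_iff_of_notMem_uIcc hq] at hcross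
  exact hcross.elim (fun h => h.2 h.1) (fun h => h.2 h.1)

theorem exists_coe_ne_endpoints [Finite V] :
    ∃ x : ℝ, ∀ v, (x : Circ) ≠ R.p v ∧ (x : Circ) ≠ R.q v := by
  have : Infinite (Ico (0 : ℝ) (0 + 1)) := (Ico_infinite (by norm_num)).to_subtype
  have : Infinite Circ := Infinite.of_injective _ (equivIco 1 0).symm.injective
  obtain ⟨z, hz⟩ := (Set.finite_range (Sum.elim R.p R.q)).exists_notMem
  obtain ⟨x, rfl⟩ := QuotientAddGroup.mk_surjective z
  exact ⟨x, fun v => ⟨fun h => hz ⟨.inl v, h.symm⟩, fun h => hz ⟨.inr v, h.symm⟩⟩⟩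

variable {R x}

theorem lt_lo (hx : ∀ v, (x : Circ) ≠ R.p v ∧ (x : Circ) ≠ R.q v) (v : V) : x < R.lo x v := by
  have hne : ∀ z : Circ, (x : Circ) ≠ z → x ≠ equivIco 1 x z := fun z hz h =>
    hz (by rw [h, coe_equivIco])
  exact lt_min ((equivIco 1 x _).2.1.lt_of_ne (hne _ (hx v).1))
    ((equivIco 1 x _).2.1.lt_of_ne (hne _ (hx v).2))

theorem satChord_of_mem_Ioo (hx : ∀ v, (x : Circ) ≠ R.p v ∧ (x : Circ) ≠ R.q v)
    {T : Finset Circ} (hxT : (x : Circ) ∈ T) {s : ℝ} (hsT : (s : Circ) ∈ T) {v : V}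
    (hs : s ∈ Ioo (R.lo x v) (R.hi x v)) : R.SatChord T v := by
  have hin : (equivIco 1 x (s : Circ) : ℝ) ∈
      uIoo (equivIco 1 x (R.p v) : ℝ) (equivIco 1 x (R.q v)) := by
    rwa [equivIco_coe_of_mem (R.Ioo_lo_hi_subset x v hs)]
  have hout : (equivIco 1 x (x : Circ) : ℝ) ∉
      uIcc (equivIco 1 x (R.p v) : ℝ) (equivIco 1 x (R.q v)) := by
    rw [equivIco_coe_of_mem ⟨le_rfl, lt_add_one x⟩]
    exact fun hmem => hmem.1.not_gt (lt_lo hx v)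
  have hne := min_lt_max.1 (R.lo_lt_hi x v)
  constructor
  · rcases hne.lt_or_gt with h | h
    · exact ⟨s, hsT, (sbtw_iff_of_mem_uIoo hin).2 h⟩
    · exact ⟨x, hxT, (sbtw_iff_of_notMem_uIcc hout).2 h⟩
  · rw [uIoo_comm] at hin
    rw [uIcc_comm] at hout
    rcases hne.lt_or_gt with h | h
    · exact ⟨x, hxT, (sbtw_iff_of_notMem_uIcc hout).2 h⟩
    · exact ⟨s, hsT, (sbtw_iff_of_mem_uIoo hin).2 h⟩

theorem goodCorners_insert_image (hx : ∀ v, (x : Circ) ≠ R.p v ∧ (x : Circ) ≠ R.q v)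
    {T : Finset ℝ}
    (hT : ∀ s ∈ T, s ∉ range (R.endpointPos x) ∧ ∃ v, s ∈ Ioo (R.lo x v) (R.hi x v))
    (hcover : ∀ v, ∃ s ∈ T, s ∈ Ioo (R.lo x v) (R.hi x v)) :
    R.GoodCorners (insert (x : Circ) (T.image (↑))) := by
  refine ⟨fun t ht v => ?_, fun v => ?_⟩
  · rcases Finset.mem_insert.1 ht with rfl | ht
    · exact hx v
    obtain ⟨s, hs, rfl⟩ := Finset.mem_image.1 ht
    obtain ⟨hsE, w, hsw⟩ := hT s hs
    have hs' := equivIco_coe_of_mem (R.Ioo_lo_hi_subset x w hsw)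
    exact ⟨fun h => hsE ⟨.inl v, by rw [endpointPos, Sum.elim_inl, ← h, hs']⟩,
      fun h => hsE ⟨.inr v, by rw [endpointPos, Sum.elim_inr, ← h, hs']⟩⟩
  · obtain ⟨s, hs, hsv⟩ := hcover v
    exact satChord_of_mem_Ioo hx (Finset.mem_insert_self _ _)
      (Finset.mem_insert_of_mem (Finset.mem_image_of_mem _ hs)) hsv

end CircleRep

theorem card_le_indepNumber {V : Type} [Fintype V] {G : SimpleGraph V} {s : Finset V}
    (hs : ∀ u ∈ s, ∀ v ∈ s, u ≠ v → ¬ G.Adj u v) : s.card ≤ indepNumber G :=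
  le_csSup ⟨Fintype.card V, by rintro n ⟨t, -, rfl⟩; exact t.card_le_univ⟩ ⟨s, hs, rfl⟩

/-- for any circle graph `G`, `ψ(G) ≤ α(G) + 1`. -/
theorem stmt9 {V : Type} [Fintype V] (G : SimpleGraph V)
    (hcirc : Nonempty (CircleRep V G)) :
    polygonNumber G ≤ indepNumber G + 1 := by
  obtain ⟨R⟩ := hcirc
  obtain ⟨x, hx⟩ := R.exists_coe_ne_endpoints
  obtain ⟨T, I, -, hcard, hT, hcover, hdisj⟩ :=
    exists_stabbing_finset_card_le_of_pairwise_disjoint (R.lo x) (R.hi x) (R.lo_lt_hi x)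
      (finite_range (R.endpointPos x)) Finset.univ
  have hgood : R.GoodCorners (insert (x : Circ) (T.image (↑))) :=
    CircleRep.goodCorners_insert_image hx
      (fun s hs => ⟨(hT s hs).1, (hT s hs).2.imp fun _ => And.right⟩)
      (fun v => hcover v (Finset.mem_univ v))
  have hindep : I.card ≤ indepNumber G := card_le_indepNumber fun u hu v hv huv => by
    rcases hdisj u hu v hv huv with h | h
    · exact R.not_adj_of_hi_le_lo x h
    · exact fun hadj => R.not_adj_of_hi_le_lo x h hadj.symm
  calc polygonNumber G ≤ (insert (x : Circ) (T.image (↑))).card := Nat.sInf_le ⟨R, _, rfl, hgood⟩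
    _ ≤ T.card + 1 := (Finset.card_insert_le _ _).trans (by gcongr; exact Finset.card_image_le)
    _ ≤ indepNumber G + 1 := by omega
end
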